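/- Let T > 0, let π = (π_n) be a sequence of partitions of [0,T] with mesh tending to 0, let p > 2, and let x : [0,T] → ℝ be continuous with finite p-th variation along π. Write φ(t) = [x]^(p)_π(t) and assume φ is continuously differentiable with 0 < c ≤ φ′ ≤ C < ∞ on [0,T]. For q > 0 set S^{(q)}_n(t) = Σ_{t^n_{i+1} ≤ t} (φ(t^n_{i+1}) − φ(t^n_i))^{(q−2)/q} (x(t^n_{i+1}) − x(t^n_i))². If for some t ∈ [0,T] one has limsup_{n→∞} S^{(p)}_n(t) < ∞, then for every q > p one has lim_{n→∞} S^{(q)}_n(t) = 0. -/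

import Mathlib

/-!
Since `φ` is uniformly continuous on `[0,T]` and the mesh of `π_n` tends to `0`, the largest
increment `ω_n` of `φ` over a cell of `π_n` tends to `0`. As `(q-2)/q = (p-2)/p + (2/p - 2/q)`
and `φ` is nondecreasing, each term of `S^{(q)}_n(t)` is at most `ω_n^{2/p-2/q}` times the
corresponding term of `S^{(p)}_n(t)`. Hence `0 ≤ S^{(q)}_n(t) ≤ ω_n^{2/p-2/q} S^{(p)}_n(t) → 0`,
because `S^{(p)}_n(t)` is eventually bounded.
-/

open Filter Topology

/-- `S^{(q)}_n(t)` of the paper, for the partition `a 0 < a 1 < ⋯ < a m` in place of `π_n`. -/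
noncomputable def scaledQVSum (a : ℕ → ℝ) (m : ℕ) (φ x : ℝ → ℝ) (q t : ℝ) : ℝ :=
  ∑ i ∈ Finset.range m, if a (i + 1) ≤ t then
    (φ (a (i + 1)) - φ (a i)) ^ ((q - 2) / q) * (x (a (i + 1)) - x (a i)) ^ 2 else 0

noncomputable def maxIncrement (a : ℕ → ℝ) (m : ℕ) (f : ℝ → ℝ) : ℝ :=
  ⨆ i : Fin m, |f (a ((i : ℕ) + 1)) - f (a i)|

theorem Real.rpow_le_rpow_sub_mul_rpow {d r a b : ℝ} (hd : 0 ≤ d) (hdr : d ≤ r) (hab : a ≤ b)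
    (hb : b ≠ 0) : d ^ b ≤ r ^ (b - a) * d ^ a := by
  calc d ^ b = d ^ (b - a) * d ^ a := by
        rw [← Real.rpow_add' hd (by simpa using hb), sub_add_cancel]
    _ ≤ r ^ (b - a) * d ^ a := by gcongr

theorem Filter.isBoundedUnder_le_of_limsup_coe_lt_top {α : Type*} {l : Filter α} {u : α → ℝ}
    (h : limsup (fun n => (u n : EReal)) l < ⊤) : IsBoundedUnder (· ≤ ·) l u := by
  obtain ⟨z, hz, hztop⟩ := exists_between h
  lift z to ℝ using ⟨hztop.ne, ne_bot_of_gt hz⟩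
  exact ⟨z, (eventually_lt_of_limsup_lt hz).mono fun n hn => (EReal.coe_lt_coe_iff.1 hn).le⟩

section Partition

variable {a : ℕ → ℝ} {m : ℕ}

theorem mem_Icc_of_partition {T : ℝ} (h0 : a 0 = 0) (hm : a m = T)
    (hmono : ∀ i < m, a i ≤ a (i + 1)) {i : ℕ} (hi : i ≤ m) : a i ∈ Set.Icc 0 T := by
  have hmon : MonotoneOn a (Set.Iic m) :=
    monotoneOn_of_le_succ Set.ordConnected_Iic fun j _ _ hj =>
      hmono j (Order.succ_le_iff.1 hj)
  exact ⟨h0 ▸ hmon (Nat.zero_le m) hi (Nat.zero_le i), hm ▸ hmon hi (le_refl m) hi⟩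

theorem abs_sub_le_maxIncrement {f : ℝ → ℝ} {i : ℕ} (hi : i < m) :
    |f (a (i + 1)) - f (a i)| ≤ maxIncrement a m f :=
  le_ciSup (f := fun j : Fin m => |f (a ((j : ℕ) + 1)) - f (a j)|)
    (Finite.bddAbove_range _) ⟨i, hi⟩

theorem maxIncrement_nonneg (f : ℝ → ℝ) : 0 ≤ maxIncrement a m f :=
  Real.iSup_nonneg fun _ => abs_nonneg _

theorem scaledQVSum_nonneg {φ x : ℝ → ℝ} (hφ : ∀ i < m, φ (a i) ≤ φ (a (i + 1))) (q t : ℝ) :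
    0 ≤ scaledQVSum a m φ x q t := by
  refine Finset.sum_nonneg fun i hi => ?_
  split_ifs
  · have := sub_nonneg.2 (hφ i (Finset.mem_range.1 hi))
    positivity
  · exact le_rfl

theorem scaledQVSum_le_maxIncrement_rpow_mul {φ x : ℝ → ℝ}
    (hφ : ∀ i < m, φ (a i) ≤ φ (a (i + 1))) {p q : ℝ} (hp : 0 < p) (hpq : p ≤ q) (hq : q ≠ 2)
    (t : ℝ) :
    scaledQVSum a m φ x q t ≤ maxIncrement a m φ ^ (2 / p - 2 / q) * scaledQVSum a m φ x p t := by
  have hq0 : q ≠ 0 := (hp.trans_le hpq).ne'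
  have hexp : (q - 2) / q - (p - 2) / p = 2 / p - 2 / q := by field_simp; ring
  have hle : (p - 2) / p ≤ (q - 2) / q := by
    rw [← sub_nonneg, hexp, sub_nonneg]
    exact div_le_div_of_nonneg_left zero_le_two hp hpq
  have hne : (q - 2) / q ≠ 0 := div_ne_zero (sub_ne_zero.2 hq) hq0
  unfold scaledQVSum
  rw [Finset.mul_sum]
  refine Finset.sum_le_sum fun i hi => ?_
  have hi := Finset.mem_range.1 hi
  have hΔ := sub_nonneg.2 (hφ i hi)
  split_ifs
  · rw [← mul_assoc, ← hexp]
    gcongr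
    exact Real.rpow_le_rpow_sub_mul_rpow hΔ
      ((le_abs_self _).trans (abs_sub_le_maxIncrement hi)) hle hne
  · simp

end Partition

theorem tendsto_maxIncrement_zero {π : ℕ → ℕ → ℝ} {N : ℕ → ℕ} {s : Set ℝ} {f : ℝ → ℝ}
    (hf : UniformContinuousOn f s) (hmem : ∀ n, ∀ i ≤ N n, π n i ∈ s)
    (hmono : ∀ n, ∀ i < N n, π n i ≤ π n (i + 1))
    (hmesh : ∀ ε : ℝ, 0 < ε → ∀ᶠ n in atTop, ∀ i < N n, π n (i + 1) - π n i < ε) :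
    Tendsto (fun n => maxIncrement (π n) (N n) f) atTop (𝓝 0) := by
  refine Metric.tendsto_nhds.2 fun ε hε => ?_
  obtain ⟨δ, hδ, hfδ⟩ := Metric.uniformContinuousOn_iff.1 hf (ε / 2) (half_pos hε)
  filter_upwards [hmesh δ hδ] with n hn
  have hosc : maxIncrement (π n) (N n) f ≤ ε / 2 := by
    refine Real.iSup_le (fun i => ?_) (half_pos hε).le
    have hclose : dist (π n (i + 1)) (π n i) < δ := by
      rw [Real.dist_eq, abs_of_nonneg (sub_nonneg.2 (hmono n i i.2))]
      exact hn i i.2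
    exact (hfδ _ (hmem n _ i.2) _ (hmem n _ i.2.le) hclose).le
  rw [Real.dist_eq, sub_zero, abs_of_nonneg (maxIncrement_nonneg f)]
  linarith

theorem scaled_qv_switch_zero_of_limsup_lt_top
    (T : ℝ)
    (π : ℕ → ℕ → ℝ) (N : ℕ → ℕ)
    (hπ0 : ∀ n, π n 0 = 0)
    (hπT : ∀ n, π n (N n) = T)
    (hπmono : ∀ n, ∀ i < N n, π n i < π n (i + 1))
    (hmesh : ∀ ε : ℝ, 0 < ε → ∀ᶠ n in atTop, ∀ i < N n, π n (i + 1) - π n i < ε)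
    (p : ℝ) (hp : 2 < p)
    (x : ℝ → ℝ)
    (φ : ℝ → ℝ)
    (hφcont : ContinuousOn φ (Set.Icc 0 T))
    (hφmono : MonotoneOn φ (Set.Icc 0 T))
    (t : ℝ)
    (hsup : Filter.limsup (fun n => (((fun n => ∑ i ∈ Finset.range (N n),
        if π n (i + 1) ≤ t then
          (φ (π n (i + 1)) - φ (π n i)) ^ ((p - 2) / p)
            * (x (π n (i + 1)) - x (π n i)) ^ 2
        else 0) n : ℝ) : EReal)) atTop < ⊤) :
    ∀ q : ℝ, p < q →
      Tendsto (fun n => ∑ i ∈ Finset.range (N n),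
        if π n (i + 1) ≤ t then
          (φ (π n (i + 1)) - φ (π n i)) ^ ((q - 2) / q)
            * (x (π n (i + 1)) - x (π n i)) ^ 2
        else 0) atTop (𝓝 0) := by
  intro q hpq
  change Tendsto (fun n => scaledQVSum (π n) (N n) φ x q t) atTop (𝓝 0)
  have hπle : ∀ n, ∀ i < N n, π n i ≤ π n (i + 1) := fun n i hi => (hπmono n i hi).le
  have hπmem : ∀ n, ∀ i ≤ N n, π n i ∈ Set.Icc 0 T := fun n i =>
    mem_Icc_of_partition (hπ0 n) (hπT n) (hπle n)
  have hφle : ∀ n, ∀ i < N n, φ (π n i) ≤ φ (π n (i + 1)) := fun n i hi =>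
    hφmono (hπmem n i hi.le) (hπmem n (i + 1) hi) (hπle n i hi)
  have hp0 : 0 < p := zero_lt_two.trans hp
  have hα : 0 < 2 / p - 2 / q := sub_pos.2 (div_lt_div_of_pos_left two_pos hp0 hpq)
  have hosc : Tendsto (fun n => maxIncrement (π n) (N n) φ ^ (2 / p - 2 / q)) atTop (𝓝 0) := by
    simpa [Real.zero_rpow hα.ne'] using (tendsto_maxIncrement_zero
      (isCompact_Icc.uniformContinuousOn_of_continuous hφcont) hπmem hπle hmesh).rpow_const
      (Or.inr hα.le)
  change limsup (fun n => (scaledQVSum (π n) (N n) φ x p t : EReal)) atTop < ⊤ at hsup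
  have hbdd : IsBoundedUnder (· ≤ ·) atTop fun n => ‖scaledQVSum (π n) (N n) φ x p t‖ := by
    obtain ⟨M, hM⟩ := isBoundedUnder_le_of_limsup_coe_lt_top hsup
    refine ⟨M, eventually_map.2 ((eventually_map.1 hM).mono fun n hn => ?_)⟩
    rwa [Real.norm_of_nonneg (scaledQVSum_nonneg (hφle n) p t)]
  exact squeeze_zero (fun n => scaledQVSum_nonneg (hφle n) q t)
    (fun n => scaledQVSum_le_maxIncrement_rpow_mul (hφle n) hp0 hpq.le (hp.trans hpq).ne' t)
    (hosc.zero_mul_isBoundedUnder_le hbdd)
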